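/- The multiscale Monge decomposition algorithm approximates the optimum within a multiplicative factor (1 + ε): defining ALG_0 = 0 and, for 1 ≤ i ≤ n, ALG_i = min over pairs (k, j) with k ≥ 1, 0 ≤ j < i and (1 + ε)^{k−1} ≤ i − j ≤ (1 + ε)^{k} of [ ALG_j + w'(j, i)/(1 + ε)^{k−1} + C ], one has OPT_i ≤ ALG_i ≤ (1 + ε)·OPT_i for all 0 ≤ i ≤ n. -/

import Mathlib

/-!
Both bounds are proved together by strong induction on `i`, using that `w'(j, i) ≥ 0`
(Cauchy–Schwarz). A pair `(k, j)` admitted by the algorithm has `(1 + ε)^(k-1) ≤ i - j`, so it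
charges `w'(j, i)` with at least the weight `w'(j, i)/(i - j)` used by `OPT`; this gives
`OPT ≤ ALG`. Conversely, the optimal `j` for `OPT_i` lies in some geometric bracket
`(1 + ε)^(k-1) ≤ i - j ≤ (1 + ε)^k`, where the algorithm overcharges by at most a factor `1 + ε`.
-/

open Finset

variable {R : Type*} [CommRing R] [LinearOrder R] [IsStrictOrderedRing R]

theorem sum_Icc_one_sub_sum_Icc_one {M : Type*} [AddCommGroup M] (f : ℕ → M) {j i : ℕ}
    (h : j ≤ i) : ∑ m ∈ Icc 1 i, f m - ∑ m ∈ Icc 1 j, f m = ∑ m ∈ Icc (j + 1) i, f m := by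
  rw [Icc_add_one_left_eq_Ioc, ← zero_add 1, Icc_add_one_left_eq_Ioc, Icc_add_one_left_eq_Ioc,
    ← sum_Ioc_consecutive f (Nat.zero_le j) h, add_sub_cancel_left]

theorem sq_sum_Icc_le_mul_sum_sq (f : ℕ → R) {j i : ℕ} (h : j ≤ i) :
    (∑ m ∈ Icc (j + 1) i, f m) ^ 2 ≤ ((i : R) - j) * ∑ m ∈ Icc (j + 1) i, f m ^ 2 := by
  have hcard : ((#(Icc (j + 1) i) : ℕ) : R) = (i : R) - j := by
    rw [Nat.card_Icc, Nat.add_sub_add_right, Nat.cast_sub h]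
  exact hcard ▸ sq_sum_le_card_mul_sum_sq

theorem exists_pow_pred_le_le_pow [Archimedean R] {r x : R} (hr : 1 < r) (hx : 1 ≤ x) :
    ∃ k : ℕ, 1 ≤ k ∧ r ^ (k - 1) ≤ x ∧ x ≤ r ^ k := by
  obtain ⟨k, hlow, hhigh⟩ := exists_nat_pow_near hx hr
  exact ⟨k + 1, by omega, by simpa using hlow, hhigh.le⟩

section OrderedField

variable {K : Type*} [Field K] [LinearOrder K] [IsStrictOrderedRing K]

theorem div_le_mul_div_of_le_mul {w d p r : K} (hw : 0 ≤ w) (hd : 0 < d) (hp : 0 < p)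
    (h : d ≤ r * p) : w / p ≤ r * (w / d) := by
  rw [← mul_div_assoc, div_le_div_iff₀ hp hd]
  nlinarith

theorem exists_pow_bracket_div_le_mul_div [Archimedean K] {r w d : K} (hr : 1 < r) (hw : 0 ≤ w)
    (hd : 1 ≤ d) :
    ∃ k : ℕ, 1 ≤ k ∧ r ^ (k - 1) ≤ d ∧ d ≤ r ^ k ∧ w / r ^ (k - 1) ≤ r * (w / d) := by
  obtain ⟨k, hk, hlow, hhigh⟩ := exists_pow_pred_le_le_pow hr hd
  refine ⟨k, hk, hlow, hhigh, div_le_mul_div_of_le_mul hw (by linarith) (by positivity) ?_⟩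
  rwa [← pow_succ', Nat.sub_add_cancel hk]

end OrderedField

/-- The multiscale Monge decomposition approximates the optimum within a
multiplicative factor `(1+ε)`: with `ALG 0 = 0` and `ALG i` the minimum over pairs `(k, j)`
with `k ≥ 1`, `0 ≤ j < i` and `(1+ε)^(k−1) ≤ i − j ≤ (1+ε)^k` of
`ALG j + w'(j,i)/(1+ε)^(k−1) + C`, one has `OPT i ≤ ALG i ≤ (1+ε)·OPT i` for all `0 ≤ i ≤ n`. -/
theorem stmt12 (n : ℕ) (P : ℕ → ℝ) (C : ℝ) (hC : 0 ≤ C)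
    (S : ℕ → ℝ) (hS : ∀ i, S i = ∑ m ∈ Finset.Icc 1 i, P m)
    (w' : ℕ → ℕ → ℝ)
    (hw' : ∀ j i : ℕ, j < i → i ≤ n →
      w' j i = ((i : ℝ) - j) * ∑ m ∈ Finset.Icc (j + 1) i, (P m) ^ 2 - (S i - S j) ^ 2)
    (ε : ℝ) (hε : 0 < ε)
    (OPT : ℕ → ℝ) (hOPT0 : OPT 0 = 0)
    (hOPT : ∀ i, ∀ hi : 1 ≤ i, i ≤ n →
      OPT i = (Finset.range i).inf' (Finset.nonempty_range_iff.mpr (by omega))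
        (fun j => OPT j + w' j i / ((i : ℝ) - j)) + C)
    (ALG : ℕ → ℝ) (hALG0 : ALG 0 = 0)
    (hALG : ∀ i, 1 ≤ i → i ≤ n →
      IsLeast {z : ℝ | ∃ k j : ℕ, 1 ≤ k ∧ j < i ∧
          (1 + ε) ^ (k - 1) ≤ (i : ℝ) - j ∧ (i : ℝ) - j ≤ (1 + ε) ^ k ∧
          z = ALG j + w' j i / (1 + ε) ^ (k - 1) + C}
        (ALG i)) :
    ∀ i, i ≤ n → OPT i ≤ ALG i ∧ ALG i ≤ (1 + ε) * OPT i := by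
  have hw'_nonneg : ∀ j i, j < i → i ≤ n → 0 ≤ w' j i := fun j i hji hin => by
    rw [hw' j i hji hin, hS, hS, sum_Icc_one_sub_sum_Icc_one P hji.le, sub_nonneg]
    exact sq_sum_Icc_le_mul_sum_sq P hji.le
  have h1ε : 1 < 1 + ε := by linarith
  intro i
  induction i using Nat.strong_induction_on with
  | _ i ih =>
  intro hin
  rcases Nat.eq_zero_or_pos i with rfl | hi
  · simp [hOPT0, hALG0]
  rw [hOPT i hi hin]
  constructor
  · obtain ⟨k, j, -, hji, hlow, -, hALGi⟩ := (hALG i hi hin).1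
    calc _ ≤ OPT j + w' j i / ((i : ℝ) - j) + C := by
          gcongr; exact inf'_le _ (mem_range.2 hji)
      _ ≤ ALG j + w' j i / (1 + ε) ^ (k - 1) + C := by
          gcongr ?_ + ?_ + C
          · exact (ih j hji (hji.le.trans hin)).1
          · exact div_le_div_of_nonneg_left (hw'_nonneg j i hji hin) (by positivity) hlow
      _ = ALG i := hALGi.symm
  · obtain ⟨j, hji, hmin⟩ := exists_mem_eq_inf' (nonempty_range_iff.2 hi.ne')
      (fun j => OPT j + w' j i / ((i : ℝ) - j))
    rw [mem_range] at hji
    have hgap : (1 : ℝ) ≤ i - j := le_sub_iff_add_le'.2 (by exact_mod_cast hji)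
    obtain ⟨k, hk, hlow, hhigh, hscale⟩ :=
      exists_pow_bracket_div_le_mul_div h1ε (hw'_nonneg j i hji hin) hgap
    calc ALG i ≤ ALG j + w' j i / (1 + ε) ^ (k - 1) + C :=
          (hALG i hi hin).2 ⟨k, j, hk, hji, hlow, hhigh, rfl⟩
      _ ≤ (1 + ε) * OPT j + (1 + ε) * (w' j i / ((i : ℝ) - j)) + (1 + ε) * C := by
          gcongr
          · exact (ih j hji (hji.le.trans hin)).2
          · exact le_mul_of_one_le_left hC h1ε.le
      _ = _ := by rw [hmin]; ring
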